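/- Let H be a Hopf algebra over a field k, R a commutative k-algebra, and J the two-sided ideal of H generated by the subspace I₁(H). An algebra morphism ψ : H → R vanishes on J (equivalently, factors through the quotient H^⟨1⟩ = H/J) if and only if ψ commutes under convolution with every scalar linear form: for every linear form φ ∈ H* = Hom(H,k) and every x ∈ H, one has φ(x₂)·ψ(x₁) = φ(x₁)·ψ(x₂) in R, i.e. ψ * (η_R ∘ φ) = (η_R ∘ φ) * ψ in Hom(H,R). -/

import Mathlib

/-! Since `ψ` is `k`-linear, `(η_R ∘ φ) * ψ` sends `x` to `ψ(φ(x₁)·x₂)` and `ψ * (η_R ∘ φ)` sends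
it to `ψ(φ(x₂)·x₁)`, so `ψ` commutes with `η_R ∘ φ` exactly when it kills the generators of `I₁(H)`
built from `φ`. Being multiplicative, `ψ` kills the ideal generated by `I₁(H)` iff it kills `I₁(H)`. -/

open TensorProduct

/-- `I₁(H)`: the subspace of `H` spanned by the elements
`φ(x₁)·x₂ − φ(x₂)·x₁` for `x ∈ H` and linear forms `φ : H → k`. -/
noncomputable def lazySubspace (k : Type*) [Field k] (H : Type*)
    [Ring H] [HopfAlgebra k H] : Submodule k H :=
  Submodule.span k {y : H | ∃ (x : H) (φ : H →ₗ[k] k),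
    y = (TensorProduct.lid k H)
          (TensorProduct.map φ LinearMap.id (Coalgebra.comul x))
      - (TensorProduct.rid k H)
          (TensorProduct.map LinearMap.id φ (Coalgebra.comul x))}

/-- The two-sided ideal of `H` generated by `I₁(H)`, as a `k`-subspace:
the span of the elements `a * y * b` with `y ∈ I₁(H)` and `a, b ∈ H`. -/
noncomputable def lazyIdeal (k : Type*) [Field k] (H : Type*)
    [Ring H] [HopfAlgebra k H] : Submodule k H :=
  Submodule.span k {z : H | ∃ (a b y : H), y ∈ lazySubspace k H ∧ z = a * y * b}

/-- The convolution product `f * g = μ_R ∘ (f ⊗ g) ∘ Δ`. -/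
noncomputable def conv (k : Type*) [Field k] {D R : Type*}
    [AddCommGroup D] [Module k D] [CoalgebraStruct k D]
    [CommRing R] [Algebra k R] (f g : D →ₗ[k] R) : D →ₗ[k] R :=
  LinearMap.mul' k R ∘ₗ TensorProduct.map f g ∘ₗ Coalgebra.comul

section ScalarForms

variable {k M R : Type*} [CommSemiring k] [AddCommMonoid M] [Module k M]
  [CommSemiring R] [Algebra k R]

theorem mul'_comp_map_algebraLinearMap_comp_left (φ : M →ₗ[k] k) (f : M →ₗ[k] R) :
    LinearMap.mul' k R ∘ₗ TensorProduct.map (Algebra.linearMap k R ∘ₗ φ) f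
      = f ∘ₗ (TensorProduct.lid k M).toLinearMap ∘ₗ TensorProduct.map φ LinearMap.id := by
  ext a b
  simp [Algebra.smul_def]

theorem mul'_comp_map_algebraLinearMap_comp_right (φ : M →ₗ[k] k) (f : M →ₗ[k] R) :
    LinearMap.mul' k R ∘ₗ TensorProduct.map f (Algebra.linearMap k R ∘ₗ φ)
      = f ∘ₗ (TensorProduct.rid k M).toLinearMap ∘ₗ TensorProduct.map LinearMap.id φ := by
  ext a b
  simp [Algebra.smul_def, mul_comm]

end ScalarForms

section Convolution

variable {k D R : Type*} [Field k] [AddCommGroup D] [Module k D] [CoalgebraStruct k D]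
  [CommRing R] [Algebra k R]

theorem conv_algebraLinearMap_comp_left_apply (φ : D →ₗ[k] k) (f : D →ₗ[k] R) (x : D) :
    conv k (Algebra.linearMap k R ∘ₗ φ) f x
      = f (TensorProduct.lid k D (TensorProduct.map φ LinearMap.id (Coalgebra.comul x))) := by
  rw [conv, ← LinearMap.comp_assoc, mul'_comp_map_algebraLinearMap_comp_left]
  rfl

theorem conv_algebraLinearMap_comp_right_apply (φ : D →ₗ[k] k) (f : D →ₗ[k] R) (x : D) :
    conv k f (Algebra.linearMap k R ∘ₗ φ) x
      = f (TensorProduct.rid k D (TensorProduct.map LinearMap.id φ (Coalgebra.comul x))) := by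
  rw [conv, ← LinearMap.comp_assoc, mul'_comp_map_algebraLinearMap_comp_right]
  rfl

theorem conv_comm_algebraLinearMap_comp_iff (φ : D →ₗ[k] k) (f : D →ₗ[k] R) :
    conv k f (Algebra.linearMap k R ∘ₗ φ) = conv k (Algebra.linearMap k R ∘ₗ φ) f ↔
      ∀ x : D, f (TensorProduct.lid k D (TensorProduct.map φ LinearMap.id (Coalgebra.comul x))
        - TensorProduct.rid k D (TensorProduct.map LinearMap.id φ (Coalgebra.comul x))) = 0 := by
  simp only [LinearMap.ext_iff, conv_algebraLinearMap_comp_left_apply,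
    conv_algebraLinearMap_comp_right_apply, map_sub, sub_eq_zero]
  exact forall_congr' fun _ => eq_comm

end Convolution

theorem lazySubspace_le_ker_iff {k H R : Type*} [Field k] [Ring H] [HopfAlgebra k H]
    [CommRing R] [Algebra k R] (f : H →ₗ[k] R) :
    lazySubspace k H ≤ LinearMap.ker f ↔
      ∀ φ : H →ₗ[k] k,
        conv k f (Algebra.linearMap k R ∘ₗ φ) = conv k (Algebra.linearMap k R ∘ₗ φ) f := by
  simp only [conv_comm_algebraLinearMap_comp_iff, lazySubspace, Submodule.span_le]
  constructor
  · intro h φ x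
    exact h ⟨x, φ, rfl⟩
  · rintro h _ ⟨x, φ, rfl⟩
    exact h φ x

theorem span_mul_mul_le_ker_iff {k A B : Type*} [CommSemiring k] [Semiring A] [Algebra k A]
    [Semiring B] [Algebra k B] (ψ : A →ₐ[k] B) (S : Submodule k A) :
    Submodule.span k {z : A | ∃ a b y : A, y ∈ S ∧ z = a * y * b}
        ≤ LinearMap.ker ψ.toLinearMap ↔ S ≤ LinearMap.ker ψ.toLinearMap := by
  rw [Submodule.span_le]
  constructor
  · intro h y hy
    exact h ⟨1, 1, y, hy, by rw [one_mul, mul_one]⟩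
  · rintro h _ ⟨a, b, y, hy, rfl⟩
    have hψy : ψ y = 0 := h hy
    simp [hψy]

/-- an algebra morphism `ψ : H → R` vanishes on the two-sided
ideal `J` generated by `I₁(H)` (equivalently, factors through `H^⟨1⟩ = H/J`)
if and only if `ψ` commutes under convolution with every scalar linear form,
i.e. `ψ * (η_R ∘ φ) = (η_R ∘ φ) * ψ` in `Hom(H,R)` for every `φ : H → k`. -/
theorem algHom_vanishes_on_lazyIdeal_iff_central
    (k : Type*) [Field k] (H : Type*) [Ring H] [HopfAlgebra k H]
    (R : Type*) [CommRing R] [Algebra k R] (ψ : H →ₐ[k] R) :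
    (∀ z ∈ lazyIdeal k H, ψ z = 0) ↔
    (∀ φ : H →ₗ[k] k,
      conv k ψ.toLinearMap (Algebra.linearMap k R ∘ₗ φ)
        = conv k (Algebra.linearMap k R ∘ₗ φ) ψ.toLinearMap) := by
  change lazyIdeal k H ≤ LinearMap.ker ψ.toLinearMap ↔ _
  rw [lazyIdeal, span_mul_mul_le_ker_iff, lazySubspace_le_ker_iff]
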